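/- Let R, R̄ > 0, let X be a finite set, and let P(x^n, y^n) be a joint probability distribution on X^n × {R, −R̄}^n with all values strictly positive, and let f_i(x^i, y^{i−1}) be betting fractions with 1 + f_i·y_i > 0 everywhere. Then ⟨(1/n) Σ_{i=1}^n ln(1 + f_i(x^i, y^{i−1})·y_i)⟩ ≤ (1/n)·D_KL(P(y^n)‖Q(y^n)) + (1/n)·I_dr(X^n → Y^n), where I_dr(X^n → Y^n) = ⟨ln(P(y^n‖x^n)/P(y^n))⟩ is the directed information and P(y^n‖x^n) = ∏_i P(y_i | y^{i−1}, x^i). -/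

import Mathlib

/-- Outcome value map for binary gambling: `true ↦ R` (win), `false ↦ -R̄` (loss). -/
noncomputable def val (R Rbar : ℝ) (b : Bool) : ℝ := if b then R else -Rbar

noncomputable def Qb (R Rbar : ℝ) (b : Bool) : ℝ :=
  if b then Rbar / (R + Rbar) else R / (R + Rbar)

/-- The causally conditioned factor `P(y_i | y^{i-1}, x^i)` of the joint distribution
`P(x^n, y^n)`, evaluated at the pair of sequences `(x, y)`. -/
noncomputable def condY {X : Type*} [Fintype X] [DecidableEq X] (n : ℕ)
    (P : (Fin n → X) → (Fin n → Bool) → ℝ) (i : Fin n)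
    (x : Fin n → X) (y : Fin n → Bool) : ℝ :=
  (∑ x' : Fin n → X, ∑ y' : Fin n → Bool,
      if (∀ j, j ≤ i → x' j = x j) ∧ (∀ j, j ≤ i → y' j = y j) then P x' y' else 0) /
  (∑ x' : Fin n → X, ∑ y' : Fin n → Bool,
      if (∀ j, j ≤ i → x' j = x j) ∧ (∀ j, j < i → y' j = y j) then P x' y' else 0)

/-!
Fix a game `i` and let `W(b) = (1 + f_i b) Q(b)` be the bet's return weighted by `Q`. Because `Q`
makes every bet fair, `∑_b W(b) = 1`, and by causality `W` depends only on the information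
`(x^i, y^{i-1})` available before game `i`. Conditioning on that information therefore gives
`E[W(y_i) / P(y_i | y^{i-1}, x^i)] ≤ 1`, and `ln t ≤ t - 1` turns this into
`E[ln(1 + f_i y_i)] ≤ E[ln(P(y_i | y^{i-1}, x^i) / Q(y_i))]`. Summed over `i`, the right-hand side
is `D_KL(P(y^n)‖Q(y^n)) + I_dr(X^n → Y^n)`, since `∏_i P(y_i | y^{i-1}, x^i) = P(y^n‖x^n)`.
-/

open Finset hiding val
open Real

section CondProb

variable {Ω L B : Type*} [Fintype Ω] [DecidableEq L] [DecidableEq B]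
  {P : Ω → ℝ} {κ : Ω → L} {out : Ω → B} {W : Ω → B → ℝ}

noncomputable def condProb (P : Ω → ℝ) (κ : Ω → L) (out : Ω → B) (ω : Ω) : ℝ :=
  (∑ ω' with κ ω' = κ ω ∧ out ω' = out ω, P ω') / ∑ ω' with κ ω' = κ ω, P ω'

theorem condProb_pos (hP : ∀ ω, 0 < P ω) (ω : Ω) : 0 < condProb P κ out ω :=
  div_pos (sum_pos (fun ω' _ => hP ω') ⟨ω, by simp⟩) (sum_pos (fun ω' _ => hP ω') ⟨ω, by simp⟩)

theorem sum_mul_div_condProb_le [Fintype B] (hP : ∀ ω, 0 ≤ P ω) (hW : ∀ ω c, 0 ≤ W ω c)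
    (hWκ : ∀ ω ω', κ ω = κ ω' → W ω = W ω') :
    ∑ ω, P ω * (W ω (out ω) / condProb P κ out ω) ≤ ∑ ω, P ω * ∑ c, W ω c := by
  -- `N (κ ω) (out ω)` is the numerator of `condProb P κ out ω`; it is constant on each cell.
  let N : L → B → ℝ := fun l c => ∑ ω' with κ ω' = l ∧ out ω' = c, P ω'
  have hcell : ∀ ω' c, ∑ ω with κ ω = κ ω' ∧ out ω = c, P ω * W ω (out ω) / N (κ ω) (out ω)
      = W ω' c / N (κ ω') c * N (κ ω') c := by
    intro ω' c
    rw [mul_sum]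
    refine sum_congr rfl fun ω hω => ?_
    obtain ⟨hκ, rfl⟩ := (mem_filter.1 hω).2
    rw [hκ, hWκ ω ω' hκ]
    ring
  calc ∑ ω, P ω * (W ω (out ω) / condProb P κ out ω)
      = ∑ ω, ∑ ω' with κ ω' = κ ω, P ω * W ω (out ω) / N (κ ω) (out ω) * P ω' := by
        refine sum_congr rfl fun ω _ => ?_
        rw [condProb, div_div_eq_mul_div, mul_sum, sum_div, mul_sum]
        exact sum_congr rfl fun ω' _ => by ring
    _ = ∑ ω', P ω' * ∑ ω with κ ω = κ ω', P ω * W ω (out ω) / N (κ ω) (out ω) := by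
        simp only [mul_sum]
        refine sum_comm' (fun ω ω' => ?_) |>.trans (sum_congr rfl fun ω' _ =>
          sum_congr rfl fun ω _ => mul_comm _ _)
        simp [eq_comm]
    _ = ∑ ω', P ω' * ∑ c, W ω' c / N (κ ω') c * N (κ ω') c := by
        refine sum_congr rfl fun ω' _ => ?_
        rw [← sum_fiberwise _ out]
        simp only [filter_filter, hcell]
    _ ≤ ∑ ω', P ω' * ∑ c, W ω' c := by
        gcongr with ω' _ c _
        · exact hP ω'
        · rcases eq_or_ne (N (κ ω') c) 0 with h | h
          · simp [h, hW]
          · rw [div_mul_cancel₀ _ h]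

theorem sum_mul_log_div_condProb_nonpos [Fintype B] (hP : ∀ ω, 0 < P ω)
    (hW : ∀ ω c, 0 < W ω c) (hW1 : ∀ ω, ∑ c, W ω c = 1)
    (hWκ : ∀ ω ω', κ ω = κ ω' → W ω = W ω') :
    ∑ ω, P ω * log (W ω (out ω) / condProb P κ out ω) ≤ 0 := by
  calc ∑ ω, P ω * log (W ω (out ω) / condProb P κ out ω)
      ≤ ∑ ω, P ω * (W ω (out ω) / condProb P κ out ω - 1) := by
        gcongr with ω _
        · exact (hP ω).le
        · exact log_le_sub_one_of_pos (div_pos (hW _ _) (condProb_pos hP ω))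
    _ = ∑ ω, P ω * (W ω (out ω) / condProb P κ out ω) - ∑ ω, P ω * ∑ c, W ω c := by
        simp only [hW1, mul_sub, mul_one, sum_sub_distrib]
    _ ≤ 0 := sub_nonpos.2 <|
        sum_mul_div_condProb_le (fun ω => (hP ω).le) (fun ω c => (hW ω c).le) hWκ

end CondProb

section Gambling

variable {R Rbar : ℝ}

theorem Qb_pos (hR : 0 < R) (hRbar : 0 < Rbar) (b : Bool) : 0 < Qb R Rbar b := by
  cases b <;> simp only [Qb, Bool.false_eq_true, if_true, if_false] <;> positivity

/-- Under `Q` every bet is fair: the expected return of staking a fraction `t` is `1`. -/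
theorem sum_one_add_mul_val_mul_Qb (hR : 0 < R) (hRbar : 0 < Rbar) (t : ℝ) :
    ∑ b, (1 + t * val R Rbar b) * Qb R Rbar b = 1 := by
  have : R + Rbar ≠ 0 := by positivity
  simp only [Fintype.sum_bool, val, Qb, if_true, Bool.false_eq_true, if_false]
  field_simp
  ring

end Gambling

section Causal

variable {X : Type*} {n : ℕ}

/-- The side information `x^i` and the outcomes `y^{i-1}` known when betting on game `i`. -/
def past (i : Fin n) (ω : (Fin n → X) × (Fin n → Bool)) :
    (Set.Iic i → X) × (Set.Iio i → Bool) :=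
  ((Set.Iic i).domRestrict ω.1, (Set.Iio i).domRestrict ω.2)

theorem past_eq_past_iff {i : Fin n} {ω ω' : (Fin n → X) × (Fin n → Bool)} :
    past i ω = past i ω' ↔ (∀ j ≤ i, ω.1 j = ω'.1 j) ∧ ∀ j < i, ω.2 j = ω'.2 j := by
  simp [past, Set.EqOn]

theorem one_add_mul_val_pos {R Rbar : ℝ} {f : Fin n → (Fin n → X) → (Fin n → Bool) → ℝ}
    (hcausal : ∀ (i : Fin n) (x x' : Fin n → X) (y y' : Fin n → Bool),
      (∀ j, j ≤ i → x j = x' j) → (∀ j, j < i → y j = y' j) → f i x y = f i x' y')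
    (hf : ∀ i x y, 0 < 1 + f i x y * val R Rbar (y i)) (i : Fin n) (x : Fin n → X)
    (y : Fin n → Bool) (b : Bool) : 0 < 1 + f i x y * val R Rbar b := by
  have h := hf i x (Function.update y i b)
  rwa [Function.update_self, hcausal i x x _ y (fun _ _ => rfl)
    (fun j hj => Function.update_of_ne hj.ne _ _)] at h

theorem condY_eq_condProb [Fintype X] [DecidableEq X] (P : (Fin n → X) → (Fin n → Bool) → ℝ)
    (i : Fin n) (x : Fin n → X) (y : Fin n → Bool) :
    condY n P i x y = condProb (Function.uncurry P) (past i) (fun ω => ω.2 i) (x, y) := by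
  simp only [condY, condProb, sum_filter, ← Fintype.sum_prod_type', past_eq_past_iff]
  congr 1
  refine sum_congr rfl fun ω _ => if_congr ?_ rfl rfl
  simp only [le_iff_eq_or_lt, forall_eq_or_imp]
  tauto

theorem condY_pos [Fintype X] [DecidableEq X] {P : (Fin n → X) → (Fin n → Bool) → ℝ}
    (hP : ∀ x y, 0 < P x y) (i : Fin n) (x : Fin n → X) (y : Fin n → Bool) :
    0 < condY n P i x y := by
  rw [condY_eq_condProb]
  exact condProb_pos (P := Function.uncurry P) (fun ω => hP ω.1 ω.2) _

end Causal

section Kelly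

variable {X : Type*} [Fintype X] [DecidableEq X] {n : ℕ} {R Rbar : ℝ}
  {P : (Fin n → X) → (Fin n → Bool) → ℝ} {f : Fin n → (Fin n → X) → (Fin n → Bool) → ℝ}

theorem expected_log_return_le (hR : 0 < R) (hRbar : 0 < Rbar) (hP : ∀ x y, 0 < P x y)
    (hcausal : ∀ (i : Fin n) (x x' : Fin n → X) (y y' : Fin n → Bool),
      (∀ j, j ≤ i → x j = x' j) → (∀ j, j < i → y j = y' j) → f i x y = f i x' y')
    (hf : ∀ i x y, 0 < 1 + f i x y * val R Rbar (y i)) (i : Fin n) :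
    ∑ x, ∑ y, P x y * log (1 + f i x y * val R Rbar (y i))
      ≤ ∑ x, ∑ y, P x y * log (condY n P i x y / Qb R Rbar (y i)) := by
  let W : (Fin n → X) × (Fin n → Bool) → Bool → ℝ :=
    fun ω b => (1 + f i ω.1 ω.2 * val R Rbar b) * Qb R Rbar b
  have hgain := sum_mul_log_div_condProb_nonpos (P := Function.uncurry P) (κ := past i)
    (out := fun ω => ω.2 i) (W := W) (fun ω => hP ω.1 ω.2)
    (fun (ω : (Fin n → X) × (Fin n → Bool)) b =>
      mul_pos (one_add_mul_val_pos hcausal hf i ω.1 ω.2 b) (Qb_pos hR hRbar b))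
    (fun ω => sum_one_add_mul_val_mul_Qb hR hRbar _)
    (fun ω ω' h => by
      obtain ⟨hx, hy⟩ := past_eq_past_iff.1 h
      simp only [W, hcausal i ω.1 ω'.1 ω.2 ω'.2 hx hy])
  have hlog : ∀ ω : (Fin n → X) × (Fin n → Bool),
      log (1 + f i ω.1 ω.2 * val R Rbar (ω.2 i)) - log (condY n P i ω.1 ω.2 / Qb R Rbar (ω.2 i))
        = log (W ω (ω.2 i) / condY n P i ω.1 ω.2) := by
    intro ω
    have hc := condY_pos hP i ω.1 ω.2
    have hq := Qb_pos hR hRbar (ω.2 i)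
    have ha := hf i ω.1 ω.2
    rw [log_div hc.ne' hq.ne', log_div (by positivity) hc.ne', log_mul ha.ne' hq.ne']
    ring
  rw [← sub_nonpos, ← sum_sub_distrib]
  calc ∑ x, (∑ y, P x y * log (1 + f i x y * val R Rbar (y i))
        - ∑ y, P x y * log (condY n P i x y / Qb R Rbar (y i)))
      = ∑ ω, Function.uncurry P ω * log (W ω (ω.2 i) /
          condProb (Function.uncurry P) (past i) (fun ω => ω.2 i) ω) := by
        simp only [← sum_sub_distrib, ← mul_sub, ← Fintype.sum_prod_type']
        exact sum_congr rfl fun ω _ => by rw [hlog, condY_eq_condProb]; rfl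
    _ ≤ 0 := hgain

theorem log_marginal_div_add_log_causal_div_marginal (hR : 0 < R) (hRbar : 0 < Rbar)
    (hP : ∀ x y, 0 < P x y) (x : Fin n → X) (y : Fin n → Bool) :
    log ((∑ x', P x' y) / ∏ i, Qb R Rbar (y i)) + log ((∏ i, condY n P i x y) / ∑ x', P x' y)
      = ∑ i, log (condY n P i x y / Qb R Rbar (y i)) := by
  have hM : 0 < ∑ x', P x' y := sum_pos' (fun x' _ => (hP x' y).le) ⟨x, mem_univ x, hP x y⟩
  have hc : 0 < ∏ i, condY n P i x y := prod_pos fun i _ => condY_pos hP i x y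
  have hq : 0 < ∏ i, Qb R Rbar (y i) := prod_pos fun i _ => Qb_pos hR hRbar (y i)
  rw [← log_mul (by positivity) (by positivity),
    ← log_prod fun i _ => (div_pos (condY_pos hP i x y) (Qb_pos hR hRbar (y i))).ne',
    prod_div_distrib]
  congr 1
  field_simp

end Kelly

theorem stmt16_general {X : Type*} [Fintype X] [DecidableEq X] (n : ℕ)
    (R Rbar : ℝ) (hR : 0 < R) (hRbar : 0 < Rbar)
    (P : (Fin n → X) → (Fin n → Bool) → ℝ)
    (hP : ∀ x y, 0 < P x y)
    (f : Fin n → (Fin n → X) → (Fin n → Bool) → ℝ)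
    (hcausal : ∀ (i : Fin n) (x x' : Fin n → X) (y y' : Fin n → Bool),
      (∀ j, j ≤ i → x j = x' j) → (∀ j, j < i → y j = y' j) → f i x y = f i x' y')
    (hf : ∀ i x y, 0 < 1 + f i x y * val R Rbar (y i)) :
    ∑ x, ∑ y, P x y * ((1 / (n : ℝ)) * ∑ i, Real.log (1 + f i x y * val R Rbar (y i)))
      ≤ (1 / (n : ℝ)) * (∑ y, (∑ x, P x y) *
            Real.log ((∑ x, P x y) / ∏ i, Qb R Rbar (y i)))
        + (1 / (n : ℝ)) * (∑ x, ∑ y, P x y *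
            Real.log ((∏ i, condY n P i x y) / (∑ x', P x' y))) := by
  have hswap : ∀ g : Fin n → (Fin n → X) → (Fin n → Bool) → ℝ,
      ∑ x, ∑ y, P x y * ∑ i, g i x y = ∑ i, ∑ x, ∑ y, P x y * g i x y := fun g => by
    simp only [mul_sum]
    exact (sum_congr rfl fun x _ => sum_comm).trans sum_comm
  calc ∑ x, ∑ y, P x y * ((1 / (n : ℝ)) * ∑ i, log (1 + f i x y * val R Rbar (y i)))
      = 1 / n * ∑ x, ∑ y, P x y * ∑ i, log (1 + f i x y * val R Rbar (y i)) := by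
        simp only [mul_sum]
        exact sum_congr rfl fun x _ => sum_congr rfl fun y _ => sum_congr rfl fun i _ => by ring
    _ = 1 / n * ∑ i, ∑ x, ∑ y, P x y * log (1 + f i x y * val R Rbar (y i)) := by rw [hswap]
    _ ≤ 1 / n * ∑ i, ∑ x, ∑ y, P x y * log (condY n P i x y / Qb R Rbar (y i)) :=
        mul_le_mul_of_nonneg_left
          (sum_le_sum fun i _ => expected_log_return_le hR hRbar hP hcausal hf i) (by positivity)
    _ = 1 / n * ∑ x, ∑ y, P x y * ∑ i, log (condY n P i x y / Qb R Rbar (y i)) := by rw [hswap]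
    _ = _ := by
        simp only [← log_marginal_div_add_log_causal_div_marginal hR hRbar hP, mul_add,
          sum_add_distrib, sum_mul]
        rw [sum_comm (γ := Fin n → Bool)]

/-- In binary gambling with memory effects and side information, the average capital
growth rate is bounded by `(1/n)·D_KL(P(y^n)‖Q(y^n)) + (1/n)·I_dr(X^n → Y^n)`,
where `I_dr` is the directed information. -/
theorem stmt16 {X : Type*} [Fintype X] [DecidableEq X] (n : ℕ) (hn : 0 < n)
    (R Rbar : ℝ) (hR : 0 < R) (hRbar : 0 < Rbar)
    (P : (Fin n → X) → (Fin n → Bool) → ℝ)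
    (hP : ∀ x y, 0 < P x y) (hPsum : ∑ x, ∑ y, P x y = 1)
    (f : Fin n → (Fin n → X) → (Fin n → Bool) → ℝ)
    (hcausal : ∀ (i : Fin n) (x x' : Fin n → X) (y y' : Fin n → Bool),
      (∀ j, j ≤ i → x j = x' j) → (∀ j, j < i → y j = y' j) → f i x y = f i x' y')
    (hf : ∀ i x y, 0 < 1 + f i x y * val R Rbar (y i)) :
    ∑ x, ∑ y, P x y * ((1 / (n : ℝ)) * ∑ i, Real.log (1 + f i x y * val R Rbar (y i)))
      ≤ (1 / (n : ℝ)) * (∑ y, (∑ x, P x y) *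
            Real.log ((∑ x, P x y) / ∏ i, Qb R Rbar (y i)))
        + (1 / (n : ℝ)) * (∑ x, ∑ y, P x y *
            Real.log ((∏ i, condY n P i x y) / (∑ x', P x' y))) :=
  stmt16_general n R Rbar hR hRbar P hP f hcausal hf
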